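/- The total number of walks of length n with the six steps N, S, E, W, SE, NW (i.e., (0,1),(0,-1),(1,0),(-1,0),(1,-1),(-1,1)) that start at (0,0) and stay in the quarter plane equals 2^n times the n-th Motzkin number. -/

import Mathlib

/-- Number of quarter-plane walks of length `n` with steps in `S`, starting at `(0,0)`,
staying in the quarter plane, with arbitrary endpoint. -/
noncomputable def qwalkTotal (S : Set (ℤ × ℤ)) (n : ℕ) : ℕ :=
  Nat.card {w : Fin (n + 1) → ℤ × ℤ //
    w 0 = (0, 0) ∧
    (∀ i : Fin n, w i.succ - w i.castSucc ∈ S) ∧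
    (∀ i, 0 ≤ (w i).1 ∧ 0 ≤ (w i).2)}

/-- The `n`-th Motzkin number. -/
def motzkin (n : ℕ) : ℕ :=
  ∑ k ∈ Finset.range (n / 2 + 1), n.choose (2 * k) * ((2 * k).choose k / (k + 1))

/-!
Kernel method. Weight a point `(x, y)` by the polynomial `[x + 1] * [y + 1]` (`cornerPoly`), where
`[m] = 1 + X + ⋯ + X ^ (m - 1)` (`qInt`). This weight vanishes on the lines `x = -1` and `y = -1`,
so the quarter-plane constraint costs nothing, and its sum over the six neighbours of a point of
the quarter plane is `2 * (1 + T)` applied to it, where `T` (`dyckStep`) sends `X ^ h` to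
`X ^ (h - 1) + X ^ (h + 1)` (dropping `X ^ (-1)`), one step of a Dyck path. Every weight has
constant coefficient `1`, so the number of walks of length `n` is the constant coefficient of
`2 ^ n * (1 + T) ^ n 1 = 2 ^ n * ∑ j, n.choose j * T ^ j 1`, and by the ballot formula the
constant coefficient of `T ^ j 1` is `catalan k` when `j = 2 * k` and `0` when `j` is odd.
-/

open Finset Polynomial

section Walks

variable {G : Type*} [AddCommGroup G]

def appendStep (n : ℕ) : (Fin (n + 1) → G) × G ↪ (Fin (n + 2) → G) where
  toFun p := Fin.snoc p.1 (p.1 (Fin.last n) + p.2)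
  inj' p q h := by
    have hinit : p.1 = q.1 := by simpa using congrArg Fin.init h
    have hlast := congrFun h (Fin.last _)
    simp only [Fin.snoc_last, hinit, add_right_inj] at hlast
    exact Prod.ext hinit hlast

@[simp]
theorem appendStep_apply (n : ℕ) (p : (Fin (n + 1) → G) × G) :
    appendStep n p = Fin.snoc p.1 (p.1 (Fin.last n) + p.2) :=
  rfl

variable (S : Finset G) (Q : G → Prop) [DecidablePred Q]

def walks : (n : ℕ) → Finset (Fin (n + 1) → G)
  | 0 => {0}
  | n + 1 => {p ∈ walks n ×ˢ S | Q (p.1 (Fin.last n) + p.2)}.map (appendStep n)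

variable {S Q}

theorem mem_walks (hQ : Q 0) {n : ℕ} {w : Fin (n + 1) → G} :
    w ∈ walks S Q n ↔
      w 0 = 0 ∧ (∀ i : Fin n, w i.succ - w i.castSucc ∈ S) ∧ ∀ i, Q (w i) := by
  induction n with
  | zero =>
    simp only [walks, mem_singleton, IsEmpty.forall_iff, true_and]
    constructor
    · rintro rfl
      exact ⟨rfl, fun _ => hQ⟩
    · rintro ⟨h0, -⟩
      exact funext fun i => Fin.fin_one_eq_zero i ▸ h0
  | succ n ih =>
    constructor
    · simp only [walks, mem_map, mem_filter, mem_product]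
      rintro ⟨⟨v, s⟩, ⟨⟨hv, hs⟩, hQs⟩, rfl⟩
      obtain ⟨hv0, hvS, hvQ⟩ := ih.1 hv
      refine ⟨?_, fun i => ?_, fun i => ?_⟩
      · rw [← Fin.castSucc_zero, appendStep_apply, Fin.snoc_castSucc]
        exact hv0
      · induction i using Fin.lastCases with
        | last => simpa
        | cast i =>
          rw [Fin.succ_castSucc, appendStep_apply, Fin.snoc_castSucc, Fin.snoc_castSucc]
          exact hvS i
      · induction i using Fin.lastCases <;> simp_all
    · rintro ⟨h0, hS, hQw⟩
      refine mem_map.2 ⟨(Fin.init w, w (Fin.last _) - w (Fin.last n).castSucc), ?_, ?_⟩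
      · refine mem_filter.2 ⟨mem_product.2 ⟨ih.2 ⟨h0, fun i => ?_, fun i => hQw _⟩, ?_⟩, ?_⟩
        · simpa [Fin.init, ← Fin.succ_castSucc] using hS i.castSucc
        · simpa using hS (Fin.last n)
        · simpa [Fin.init] using hQw (Fin.last _)
      · simp [Fin.init]

theorem sum_walks_succ {M : Type*} [AddCommMonoid M] (f : G → M) (n : ℕ) :
    ∑ w ∈ walks S Q (n + 1), f (w (Fin.last _)) =
      ∑ w ∈ walks S Q n, ∑ s ∈ S with Q (w (Fin.last n) + s), f (w (Fin.last n) + s) := by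
  simp [walks, sum_filter, sum_product]

end Walks

abbrev quarterPlane (u : ℤ × ℤ) : Prop := 0 ≤ u.1 ∧ 0 ≤ u.2

theorem quarterPlane_zero : quarterPlane 0 := ⟨le_rfl, le_rfl⟩

theorem qwalkTotal_eq_card_walks (S : Finset (ℤ × ℤ)) (n : ℕ) :
    qwalkTotal S n = #(walks S quarterPlane n) := by
  rw [qwalkTotal, ← Nat.card_eq_finsetCard]
  exact Nat.card_congr (Equiv.subtypeEquivRight fun w => (mem_walks quarterPlane_zero).symm)

def sixSteps : Finset (ℤ × ℤ) := {(0, 1), (0, -1), (1, 0), (-1, 0), (1, -1), (-1, 1)}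

noncomputable def qInt (m : ℤ) : ℤ[X] := ∑ i ∈ range m.toNat, X ^ i

theorem qInt_add_one {m : ℤ} (hm : 0 ≤ m) : qInt (m + 1) = X * qInt m + 1 := by
  rw [qInt, qInt, ← Nat.cast_one, Int.toNat_add_nat hm, geom_sum_succ]

theorem qInt_of_nonpos {m : ℤ} (hm : m ≤ 0) : qInt m = 0 := by
  rw [qInt, Int.toNat_of_nonpos hm, sum_range_zero]

noncomputable def cornerPoly (u : ℤ × ℤ) : ℤ[X] := qInt (u.1 + 1) * qInt (u.2 + 1)

theorem cornerPoly_eq_zero {u : ℤ × ℤ} (hu : ¬ quarterPlane u) : cornerPoly u = 0 := by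
  rcases not_and_or.1 hu with h | h
  · rw [cornerPoly, qInt_of_nonpos (by omega), zero_mul]
  · rw [cornerPoly, qInt_of_nonpos (by omega : u.2 + 1 ≤ 0), mul_zero]

theorem coeff_zero_cornerPoly {u : ℤ × ℤ} (hu : quarterPlane u) : (cornerPoly u).coeff 0 = 1 := by
  simp [cornerPoly, qInt_add_one hu.1, qInt_add_one hu.2, mul_coeff_zero]

noncomputable def dyckStep : ℤ[X] →ₗ[ℤ] ℤ[X] :=
  divX_hom.toIntLinearMap ∘ₗ LinearMap.mulLeft ℤ (1 + X ^ 2)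

theorem dyckStep_apply (p : ℤ[X]) : dyckStep p = divX ((1 + X ^ 2) * p) := rfl

theorem X_mul_dyckStep (p : ℤ[X]) : X * dyckStep p = (1 + X ^ 2) * p - C (p.coeff 0) := by
  have h := X_mul_divX_add ((1 + X ^ 2) * p)
  rw [dyckStep_apply, eq_sub_iff_add_eq]
  simpa [mul_coeff_zero] using h

-- Multiplied by `X`, this is a ring identity in `X`, `qInt x` and `qInt y`, by `qInt_add_one`.
theorem sum_sixSteps_cornerPoly_add {u : ℤ × ℤ} (hu : quarterPlane u) :
    ∑ s ∈ sixSteps, cornerPoly (u + s) = (2 : ℤ) • (1 + dyckStep) (cornerPoly u) := by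
  refine mul_left_cancel₀ (X_ne_zero (R := ℤ)) ?_
  obtain ⟨x, y⟩ := u
  obtain ⟨hx, hy⟩ := hu
  have hx1 : 0 ≤ x + 1 := by omega
  have hy1 : 0 ≤ y + 1 := by omega
  rw [LinearMap.add_apply, Module.End.one_apply, smul_add, mul_add, mul_smul_comm, mul_smul_comm,
    X_mul_dyckStep, coeff_zero_cornerPoly ⟨hx, hy⟩, sixSteps, sum_insert (by decide),
    sum_insert (by decide), sum_insert (by decide), sum_insert (by decide), sum_insert (by decide),
    sum_singleton]
  simp only [cornerPoly, Prod.mk_add_mk, add_zero, neg_add_cancel_right, qInt_add_one hx,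
    qInt_add_one hy, qInt_add_one hx1, qInt_add_one hy1, map_one]
  ring

theorem sum_cornerPoly_walks (n : ℕ) :
    ∑ w ∈ walks sixSteps quarterPlane n, cornerPoly (w (Fin.last n)) =
      (2 : ℤ) ^ n • ((1 + dyckStep) ^ n) 1 := by
  induction n with
  | zero => simp [walks, cornerPoly, qInt]
  | succ n ih =>
    have hstep (w) (hw : w ∈ walks sixSteps quarterPlane n) :
        ∑ s ∈ sixSteps with quarterPlane (w (Fin.last n) + s), cornerPoly (w (Fin.last n) + s) =
          (2 : ℤ) • (1 + dyckStep) (cornerPoly (w (Fin.last n))) := by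
      rw [sum_filter_of_ne fun s _ h => by_contra (h ∘ cornerPoly_eq_zero)]
      exact sum_sixSteps_cornerPoly_add (((mem_walks quarterPlane_zero).1 hw).2.2 _)
    rw [sum_walks_succ, sum_congr rfl hstep, ← smul_sum, ← map_sum, ih, map_smul, smul_smul,
      ← pow_succ', pow_succ' (1 + dyckStep), Module.End.mul_apply]

theorem coeff_dyckStep_zero (p : ℤ[X]) : (dyckStep p).coeff 0 = p.coeff 1 := by
  simp [dyckStep_apply, coeff_divX, add_mul, coeff_X_pow_mul']

theorem coeff_dyckStep_succ (p : ℤ[X]) (h : ℕ) :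
    (dyckStep p).coeff (h + 1) = p.coeff h + p.coeff (h + 2) := by
  rw [dyckStep_apply, coeff_divX, add_mul, one_mul, coeff_add, coeff_X_pow_mul', if_pos (by omega),
    show h + 1 + 1 - 2 = h by omega, add_comm]

theorem coeff_dyckStep_pow_one_of_odd {j h : ℕ} (hjh : Odd (j + h)) :
    ((dyckStep ^ j) 1).coeff h = 0 := by
  induction j generalizing h with
  | zero => simpa [coeff_one] using hjh.pos.ne'
  | succ j ih =>
    rw [pow_succ', Module.End.mul_apply]
    cases h with
    | zero => rw [coeff_dyckStep_zero, ih (by simpa using hjh)]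
    | succ h =>
      rw [coeff_dyckStep_succ, ih (by grind), ih (by grind), add_zero]

theorem coeff_dyckStep_pow_one {j h u : ℕ} (hjh : j + h = 2 * u) :
    ((dyckStep ^ j) 1).coeff h = (j.choose u : ℤ) - j.choose (u + 1) := by
  induction j generalizing h u with
  | zero =>
    cases u <;> simp [coeff_one] <;> omega
  | succ j ih =>
    rw [pow_succ', Module.End.mul_apply]
    cases h with
    | zero =>
      obtain ⟨v, rfl⟩ : ∃ v, u = v + 1 := ⟨u - 1, by omega⟩
      obtain rfl : j = 2 * v + 1 := by omega
      rw [coeff_dyckStep_zero, ih (u := v + 1) (by omega), Nat.choose_succ_succ' (2 * v + 1) v,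
        Nat.choose_succ_succ' (2 * v + 1) (v + 1), ← Nat.choose_symm_half v]
      push_cast
      ring
    | succ h =>
      obtain ⟨v, rfl⟩ : ∃ v, u = v + 1 := ⟨u - 1, by omega⟩
      rw [coeff_dyckStep_succ, ih (u := v) (by omega), ih (u := v + 1) (by omega),
        Nat.choose_succ_succ' j v, Nat.choose_succ_succ' j (v + 1)]
      push_cast
      ring

theorem choose_sub_choose_succ_eq_catalan (k : ℕ) :
    ((2 * k).choose k : ℤ) - (2 * k).choose (k + 1) = catalan k := by
  have hcat := succ_mul_catalan_eq_centralBinom k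
  have hsucc := Nat.choose_succ_right_eq (2 * k) k
  rw [Nat.centralBinom_eq_two_mul_choose] at hcat
  rw [show 2 * k - k = k by omega] at hsucc
  refine mul_left_cancel₀ (by positivity : (k : ℤ) + 1 ≠ 0) ?_
  have hcat' : ((k : ℤ) + 1) * catalan k = (2 * k).choose k := by exact_mod_cast hcat
  have hsucc' : ((2 * k).choose (k + 1) : ℤ) * (k + 1) = (2 * k).choose k * k := by
    exact_mod_cast hsucc
  linear_combination -hsucc' - hcat'

theorem sum_range_succ_eq_sum_even {M : Type*} [AddCommMonoid M] {f : ℕ → M}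
    (hf : ∀ m, Odd m → f m = 0) (n : ℕ) :
    ∑ m ∈ range (n + 1), f m = ∑ k ∈ range (n / 2 + 1), f (2 * k) := by
  rw [← sum_image (g := (2 * ·)) fun a _ b _ hab => by simpa using hab]
  refine (sum_subset (fun m hm => ?_) fun m _ hm => hf m ?_).symm
  · obtain ⟨k, hk, rfl⟩ := mem_image.1 hm
    simp only [mem_range] at hk ⊢
    omega
  · simp only [mem_image, mem_range, not_exists, not_and] at hm
    by_contra hodd
    obtain ⟨k, rfl⟩ := Nat.not_odd_iff_even.1 hodd
    exact hm k (by simp only [mem_range] at *; omega) (by omega)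

theorem coeff_zero_one_add_dyckStep_pow (n : ℕ) : (((1 + dyckStep) ^ n) 1).coeff 0 = motzkin n := by
  have hcat (k : ℕ) : (2 * k).choose k / (k + 1) = catalan k := by
    rw [catalan_eq_centralBinom_div, Nat.centralBinom_eq_two_mul_choose]
  rw [add_comm, (Commute.one_right dyckStep).add_pow]
  simp only [one_pow, mul_one, LinearMap.sum_apply, Module.End.mul_apply,
    Module.End.natCast_apply, map_nsmul, finsetSum_coeff, coeff_smul]
  rw [motzkin]
  simp only [hcat]
  push_cast
  rw [sum_range_succ_eq_sum_even fun m hm => by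
    simp [coeff_dyckStep_pow_one_of_odd (h := 0) (by simpa using hm)]]
  refine sum_congr rfl fun k _ => ?_
  rw [coeff_dyckStep_pow_one (u := k) (by omega), choose_sub_choose_succ_eq_catalan, nsmul_eq_mul]

theorem walks_sixsteps_total (n : ℕ) :
    qwalkTotal {(0, 1), (0, -1), (1, 0), (-1, 0), (1, -1), (-1, 1)} n =
      2 ^ n * motzkin n := by
  have hS : ({(0, 1), (0, -1), (1, 0), (-1, 0), (1, -1), (-1, 1)} : Set (ℤ × ℤ)) = sixSteps := by
    simp [sixSteps]
  have hcard : (#(walks sixSteps quarterPlane n) : ℤ) =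
      (∑ w ∈ walks sixSteps quarterPlane n, cornerPoly (w (Fin.last n))).coeff 0 := by
    rw [finsetSum_coeff, sum_congr rfl fun w hw =>
      coeff_zero_cornerPoly (((mem_walks quarterPlane_zero).1 hw).2.2 _), sum_const, nsmul_one]
  rw [hS, qwalkTotal_eq_card_walks, ← Nat.cast_inj (R := ℤ), hcard, sum_cornerPoly_walks,
    coeff_smul, coeff_zero_one_add_dyckStep_pow, smul_eq_mul]
  norm_cast
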